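/- Let Ω ⊂ ℝ^d be a bounded domain and suppose κ > 0, U > 0 satisfy (U/κ)|Ω|^{1/4} < min{1, C_FP^{-2}‖i₄‖^{-2}}, where C_FP is the Friedrichs–Poincaré constant on H̃¹(Ω) = H¹(Ω) ∩ L⁴₀(Ω) and ‖i₄‖ is the norm of the embedding H¹(Ω) ↪ L⁴(Ω). Define Ã((s,φ),(r,ψ)) = κ∫_Ω s·r − U∫_Ω φ êd·r. Then for every pair (r,ψ) with ψ ∈ H̃¹(Ω) and r = ∇ψ, one has Ã((r,ψ),(r,ψ)) ≥ α̃ (‖r‖²_{L²} + ‖ψ‖²_{L⁴}), where α̃ = (κ/2)(min{1, C_FP^{-2}‖i₄‖^{-2}} − (U/κ)|Ω|^{1/4}) > 0. -/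

import Mathlib

/-!
The cross term is a Cauchy–Schwarz pairing in `L²`; on a finite measure space
`‖ψ‖_{L²} ≤ |Ω|^{1/4} ‖ψ‖_{L⁴}`, so it is at most `|Ω|^{1/4} ‖ψ‖_{L⁴} ‖r‖_{L²}`,
which Young's inequality splits evenly between `‖r‖²` and `‖ψ‖²`.
Friedrichs–Poincaré followed by the Sobolev embedding gives `‖ψ‖_{L⁴} ≤ ‖i₄‖ C_FP ‖r‖`,
so half of `κ ‖r‖²` already dominates `(κ/2) min{1, C_FP⁻² ‖i₄‖⁻²} (‖r‖² + ‖ψ‖²)`.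
-/

open MeasureTheory

theorem EuclideanSpace.norm_proj_le {ι : Type*} [Fintype ι] (i : ι) :
    ‖EuclideanSpace.proj (𝕜 := ℝ) i‖ ≤ 1 :=
  ContinuousLinearMap.opNorm_le_bound _ zero_le_one fun x => by
    simpa using PiLp.norm_apply_le x i

namespace MeasureTheory

variable {α : Type*} [MeasurableSpace α] {μ : Measure α}

theorem L2.integral_sum_mul_self_eq_norm_sq {ι : Type*} [Fintype ι]
    (r : Lp (EuclideanSpace ℝ ι) 2 μ) : ∫ x, ∑ i, r x i * r x i ∂μ = ‖r‖ ^ 2 := by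
  rw [← real_inner_self_eq_norm_sq, L2.inner_def]
  rfl

theorem L2.abs_integral_mul_le_norm_mul_norm (f g : Lp ℝ 2 μ) :
    |∫ x, f x * g x ∂μ| ≤ ‖f‖ * ‖g‖ := by
  have h := abs_real_inner_le_norm f g
  simpa only [L2.inner_def, RCLike.inner_apply, conj_trivial, mul_comm] using h

theorem Lp.norm_toLp_le_of_exponent_le [IsFiniteMeasure μ] {E : Type*} [NormedAddCommGroup E]
    {p q : ENNReal} (hp : p ≠ 0) (hpq : p ≤ q) (f : Lp E q μ) (hf : MemLp f p μ) :
    ‖hf.toLp f‖ ≤ (μ Set.univ).toReal ^ (1 / p.toReal - 1 / q.toReal) * ‖f‖ := by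
  rw [Lp.norm_toLp, Lp.norm_def, mul_comm, ENNReal.toReal_rpow, ← ENNReal.toReal_mul]
  have hexp : q.toReal⁻¹ ≤ p.toReal⁻¹ := by
    obtain rfl | hq := eq_or_ne q ⊤
    · simp
    exact inv_anti₀ (ENNReal.toReal_pos hp (ne_top_of_le_ne_top hq hpq))
      (ENNReal.toReal_mono hq hpq)
  exact ENNReal.toReal_mono (ENNReal.mul_ne_top (Lp.eLpNorm_ne_top f) (by simp [hexp]))
    (eLpNorm_le_eLpNorm_mul_rpow_measure_univ hpq (Lp.aestronglyMeasurable f))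

theorem abs_integral_mul_coord_le [IsFiniteMeasure μ] {ι : Type*} [Fintype ι]
    (ψ : Lp ℝ 4 μ) (r : Lp (EuclideanSpace ℝ ι) 2 μ) (j : ι) :
    |∫ x, ψ x * r x j ∂μ| ≤ (μ Set.univ).toReal ^ ((1 : ℝ) / 4) * ‖ψ‖ * ‖r‖ := by
  have hψ : MemLp ψ 2 μ := (Lp.memLp ψ).mono_exponent (by norm_num)
  set rj := (EuclideanSpace.proj (𝕜 := ℝ) j).compLp r
  have hint : ∫ x, ψ x * r x j ∂μ = ∫ x, hψ.toLp ψ x * rj x ∂μ := by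
    refine integral_congr_ae ?_
    filter_upwards [hψ.coeFn_toLp, (EuclideanSpace.proj (𝕜 := ℝ) j).coeFn_compLp r]
      with x hψx hrx
    simp [rj, hψx, hrx]
  have hψ_norm : ‖hψ.toLp ψ‖ ≤ (μ Set.univ).toReal ^ ((1 : ℝ) / 4) * ‖ψ‖ := by
    convert Lp.norm_toLp_le_of_exponent_le two_ne_zero (by norm_num) ψ hψ using 3
    norm_num
  have hrj_norm : ‖rj‖ ≤ ‖r‖ := (ContinuousLinearMap.norm_compLp_le _ r).trans <|
    mul_le_of_le_one_left (norm_nonneg r) (EuclideanSpace.norm_proj_le j)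
  rw [hint]
  exact (L2.abs_integral_mul_le_norm_mul_norm _ _).trans <|
    mul_le_mul hψ_norm hrj_norm (norm_nonneg _) ((norm_nonneg _).trans hψ_norm)

end MeasureTheory

theorem coercivity_bound_of_cross_le {κ U m M X Y I : ℝ} (hκ : 0 < κ) (hU : 0 ≤ U)
    (hM : 0 ≤ M) (hm : m ≤ 1) (hmY : m * Y ^ 2 ≤ X ^ 2) (hI : I ≤ M * Y * X) :
    κ / 2 * (m - U / κ * M) * (X ^ 2 + Y ^ 2) ≤ κ * X ^ 2 - U * I := by
  have hYoung : Y * X ≤ (X ^ 2 + Y ^ 2) / 2 := by nlinarith [sq_nonneg (X - Y)]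
  have hsplit : κ / 2 * (m - U / κ * M) * (X ^ 2 + Y ^ 2)
      = κ / 2 * m * (X ^ 2 + Y ^ 2) - U / 2 * M * (X ^ 2 + Y ^ 2) := by
    field_simp
  have hpoincare : κ / 2 * m * (X ^ 2 + Y ^ 2) ≤ κ * X ^ 2 := by
    have : m * X ^ 2 ≤ X ^ 2 := mul_le_of_le_one_left (sq_nonneg X) hm
    nlinarith
  rw [hsplit]
  nlinarith [mul_le_mul_of_nonneg_left hYoung (mul_nonneg hU hM), mul_le_mul_of_nonneg_left hI hU]

theorem formAtilde_coercive_general {α : Type*} [MeasurableSpace α] (μ : Measure α)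
    [IsFiniteMeasure μ] {d : ℕ}
    (κ U CFP i4 : ℝ) (hκ : 0 < κ) (hU : 0 < U) (hCFP : 0 < CFP) (hi4 : 0 < i4)
    (hsmall : U / κ * (μ Set.univ).toReal ^ ((1 : ℝ) / 4) < min 1 (CFP⁻¹ ^ 2 * i4⁻¹ ^ 2))
    (j : Fin d)
    (r : Lp (EuclideanSpace ℝ (Fin d)) 2 μ) (ψ : Lp ℝ 4 μ)
    (H1 : ℝ) (hPF : H1 ≤ CFP * ‖r‖) (hEmb : ‖ψ‖ ≤ i4 * H1) :
    0 < κ / 2 * (min 1 (CFP⁻¹ ^ 2 * i4⁻¹ ^ 2)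
        - U / κ * (μ Set.univ).toReal ^ ((1 : ℝ) / 4)) ∧
    κ * (∫ x, ∑ i, r x i * r x i ∂μ) - U * ∫ x, ψ x * r x j ∂μ
      ≥ κ / 2 * (min 1 (CFP⁻¹ ^ 2 * i4⁻¹ ^ 2)
          - U / κ * (μ Set.univ).toReal ^ ((1 : ℝ) / 4))
        * (‖r‖ ^ 2 + ‖ψ‖ ^ 2) := by
  set m := min 1 (CFP⁻¹ ^ 2 * i4⁻¹ ^ 2)
  refine ⟨by have := sub_pos.2 hsmall; positivity, ?_⟩
  have hψr : ‖ψ‖ ≤ i4 * CFP * ‖r‖ :=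
    calc ‖ψ‖ ≤ i4 * H1 := hEmb
      _ ≤ i4 * (CFP * ‖r‖) := mul_le_mul_of_nonneg_left hPF hi4.le
      _ = i4 * CFP * ‖r‖ := by ring
  have hmψ : m * ‖ψ‖ ^ 2 ≤ ‖r‖ ^ 2 := by
    calc m * ‖ψ‖ ^ 2 ≤ (i4 * CFP)⁻¹ ^ 2 * (i4 * CFP * ‖r‖) ^ 2 := by
          refine mul_le_mul ?_ (pow_le_pow_left₀ ENNReal.toReal_nonneg hψr 2) (sq_nonneg _)
            (by positivity)
          simpa only [mul_inv, mul_pow, mul_comm] using min_le_right _ _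
      _ = ‖r‖ ^ 2 := by field_simp
  rw [ge_iff_le, L2.integral_sum_mul_self_eq_norm_sq]
  exact coercivity_bound_of_cross_le hκ hU.le (Real.rpow_nonneg ENNReal.toReal_nonneg _)
    (min_le_left _ _) hmψ ((le_abs_self _).trans (abs_integral_mul_coord_le ψ r j))

/-- coercivity of `Ã((s,φ),(r,ψ)) = κ∫ s·r − U∫ φ êd·r` on the kernel,
i.e. on pairs `(r,ψ)` with `ψ ∈ H̃¹(Ω)` and `r = ∇ψ`.  The membership `ψ ∈ H̃¹` and
`r = ∇ψ` enter through the Friedrichs–Poincaré inequality `‖ψ‖_{H¹} ≤ C_FP |ψ|_{H¹}`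
(with `|ψ|_{H¹} = ‖r‖_{L²}`) and the Sobolev embedding `‖ψ‖_{L⁴} ≤ ‖i₄‖ ‖ψ‖_{H¹}`,
encoded by the abstract `H¹`-norm value `H1` together with `hPF` and `hEmb`. -/
theorem formAtilde_coercive {α : Type*} [MeasurableSpace α] (μ : Measure α)
    [IsFiniteMeasure μ] {d : ℕ} (hd : d = 2 ∨ d = 3)
    (κ U CFP i4 : ℝ) (hκ : 0 < κ) (hU : 0 < U) (hCFP : 0 < CFP) (hi4 : 0 < i4)
    (hsmall : U / κ * (μ Set.univ).toReal ^ ((1 : ℝ) / 4) < min 1 (CFP⁻¹ ^ 2 * i4⁻¹ ^ 2))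
    (j : Fin d)
    (r : Lp (EuclideanSpace ℝ (Fin d)) 2 μ) (ψ : Lp ℝ 4 μ)
    (hψ0 : ∫ x, ψ x ∂μ = 0)
    (H1 : ℝ) (hPF : H1 ≤ CFP * ‖r‖) (hEmb : ‖ψ‖ ≤ i4 * H1) :
    0 < κ / 2 * (min 1 (CFP⁻¹ ^ 2 * i4⁻¹ ^ 2)
        - U / κ * (μ Set.univ).toReal ^ ((1 : ℝ) / 4)) ∧
    κ * (∫ x, ∑ i, r x i * r x i ∂μ) - U * ∫ x, ψ x * r x j ∂μ
      ≥ κ / 2 * (min 1 (CFP⁻¹ ^ 2 * i4⁻¹ ^ 2)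
          - U / κ * (μ Set.univ).toReal ^ ((1 : ℝ) / 4))
        * (‖r‖ ^ 2 + ‖ψ‖ ^ 2) :=
  formAtilde_coercive_general μ κ U CFP i4 hκ hU hCFP hi4 hsmall j r ψ H1 hPF hEmb
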